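/- In the Heisenberg group 𝔥 = ℝ³, let d be the sub-Riemannian distance and let d_F be the Finsler distance associated with the norm ‖u‖ := max(√(u₁²+u₂²), |u₃|). Then for every r ≥ 0, the closed d_F-ball equals a vertical thickening of the closed d-ball: {q ∈ ℝ³ : d_F(0,q) ≤ r} = {p + λ·(0,0,1) : p ∈ ℝ³ with d(0,p) ≤ r, λ ∈ [−r,r]}. -/

import Mathlib

open MeasureTheory

/-- The Heisenberg group modeled on `ℝ³`. -/
abbrev Heis : Type := ℝ × ℝ × ℝ

/-- The Heisenberg Lie bracket `⁅(a,b,c),(a',b',c')⁆ = (0,0,ab'−a'b)`. -/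
def hbracket (x y : Heis) : Heis := (0, 0, x.1 * y.2.1 - y.1 * x.2.1)

/-- The Heisenberg group product `x∗y = x + y + (1/2)⁅x,y⁆`. -/
noncomputable def hmul (x y : Heis) : Heis := x + y + (2⁻¹ : ℝ) • hbracket x y

/-- The endpoint `E(u) = ∫₀¹ u + (1/2)∫₀¹ ⁅∫₀ᵗ u, u(t)⁆ dt` of the curve with control `u`. -/
noncomputable def hEndpoint (u : ℝ → Heis) : Heis :=
  (∫ t in (0:ℝ)..1, u t) +
    (2⁻¹ : ℝ) • ∫ t in (0:ℝ)..1, hbracket (∫ s in (0:ℝ)..t, u s) (u t)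

/-- The sub-Riemannian distance on the Heisenberg group: infimum of `∫₀¹ √(u₁²+u₂²)` over
`L¹` controls `u` with `u₃ = 0` a.e. steering `p` to `q`. -/
noncomputable def dH (p q : Heis) : ℝ :=
  sInf {l : ℝ | ∃ u : ℝ → Heis, IntervalIntegrable u volume 0 1 ∧
    (∀ᵐ t ∂(volume.restrict (Set.Icc (0:ℝ) 1)), (u t).2.2 = 0) ∧
    hEndpoint u = hmul (-p) q ∧
    l = ∫ t in (0:ℝ)..1, Real.sqrt ((u t).1 ^ 2 + (u t).2.1 ^ 2)}

/-- The Finsler distance associated with a norm `nrm` on `ℝ³`: infimum of `∫₀¹ nrm (u t)`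
over `L¹` controls `u` steering `p` to `q`. -/
noncomputable def dFin (nrm : Heis → ℝ) (p q : Heis) : ℝ :=
  sInf {l : ℝ | ∃ u : ℝ → Heis, IntervalIntegrable u volume 0 1 ∧
    hEndpoint u = hmul (-p) q ∧
    l = ∫ t in (0:ℝ)..1, nrm (u t)}

/-!
A Finsler control `u` splits into its horizontal part and its vertical component `u₃`. Since the
vertical axis is central, the horizontal part steers `0` to `q - λ e₃` with `λ = ∫ u₃`, and both
`|λ|` and its sub-Riemannian length are bounded by the Finsler length of `u`. Conversely, a
horizontal control of length `ℓ` steering `0` to `p` acquires a vertical component proportional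
to its speed and then reaches `p + λ e₃` at Finsler cost about `max ℓ |λ|`. Hence
`d_F(0, q) = inf_λ max (|λ|, d(0, q - λ e₃))`, and the infimum is attained because
`λ ↦ d(0, q + λ e₃)` is continuous: appending a vertical loop of length `O(√|μ|)` to a horizontal
curve shows that it is `½`-Hölder.
-/

open Set Filter Topology

lemma exists_le_of_forall_exists_lt {ψ : ℝ → ℝ} {r : ℝ} (hψ : Continuous ψ)
    (habs : ∀ x, |x| ≤ ψ x) (h : ∀ ε > 0, ∃ x, ψ x < r + ε) : ∃ x, ψ x ≤ r := by
  have mem_Icc {x : ℝ} (hx : ψ x < r + 1) : x ∈ Icc (-(r + 1)) (r + 1) :=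
    abs_le.1 ((habs x).trans hx.le)
  obtain ⟨x₁, hx₁⟩ := h 1 one_pos
  obtain ⟨x₀, -, hmin⟩ := isCompact_Icc.exists_isMinOn ⟨x₁, mem_Icc hx₁⟩ hψ.continuousOn
  refine ⟨x₀, le_of_forall_pos_lt_add fun ε hε => ?_⟩
  obtain ⟨x, hx⟩ := h (min ε 1) (lt_min hε one_pos)
  calc ψ x₀ ≤ ψ x := hmin (mem_Icc (hx.trans_le (by gcongr; exact min_le_right _ _)))
    _ < r + min ε 1 := hx
    _ ≤ r + ε := by gcongr; exact min_le_left _ _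

section ProdIntegral

variable {E F : Type*} [NormedAddCommGroup E] [NormedAddCommGroup F] {a b : ℝ} {μ : Measure ℝ}

lemma IntervalIntegrable.prodMk {g : ℝ → E} {h : ℝ → F} (hg : IntervalIntegrable g μ a b)
    (hh : IntervalIntegrable h μ a b) : IntervalIntegrable (fun t => (g t, h t)) μ a b :=
  ⟨hg.1.prodMk hh.1, hg.2.prodMk hh.2⟩

variable [NormedSpace ℝ E] [NormedSpace ℝ F] {f : ℝ → E × F}

lemma IntervalIntegrable.fst (hf : IntervalIntegrable f μ a b) :
    IntervalIntegrable (fun t => (f t).1) μ a b :=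
  ⟨hf.1.fst, hf.2.fst⟩

lemma IntervalIntegrable.snd (hf : IntervalIntegrable f μ a b) :
    IntervalIntegrable (fun t => (f t).2) μ a b :=
  ⟨hf.1.snd, hf.2.snd⟩

variable [CompleteSpace E] [CompleteSpace F]

lemma intervalIntegral.fst_integral (hf : IntervalIntegrable f μ a b) :
    (∫ t in a..b, f t ∂μ).1 = ∫ t in a..b, (f t).1 ∂μ :=
  ((ContinuousLinearMap.fst ℝ E F).intervalIntegral_comp_comm hf).symm

lemma intervalIntegral.snd_integral (hf : IntervalIntegrable f μ a b) :
    (∫ t in a..b, f t ∂μ).2 = ∫ t in a..b, (f t).2 ∂μ :=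
  ((ContinuousLinearMap.snd ℝ E F).intervalIntegral_comp_comm hf).symm

end ProdIntegral

section Concat

variable {E : Type*} [NormedAddCommGroup E] [NormedSpace ℝ E] {u v : ℝ → E}

noncomputable def concat (u v : ℝ → E) (t : ℝ) : E :=
  if t ≤ 1 / 2 then (2 : ℝ) • u (2 * t) else (2 : ℝ) • v (2 * t - 1)

lemma comp_concat {F : Type*} [NormedAddCommGroup F] [NormedSpace ℝ F] (c : E → F)
    (hc : ∀ x, c ((2 : ℝ) • x) = (2 : ℝ) • c x) (t : ℝ) :
    c (concat u v t) = concat (c ∘ u) (c ∘ v) t := by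
  unfold concat; split_ifs <;> simp [hc]

lemma concat_of_le_half {t : ℝ} (ht : t ≤ 1 / 2) : concat u v t = (2 : ℝ) • u (2 * t) :=
  if_pos ht

lemma concat_of_half_lt {t : ℝ} (ht : 1 / 2 < t) : concat u v t = (2 : ℝ) • v (2 * t - 1) :=
  if_neg (not_le.mpr ht)

lemma intervalIntegrable_concat (hu : IntervalIntegrable u volume 0 1)
    (hv : IntervalIntegrable v volume 0 1) : IntervalIntegrable (concat u v) volume 0 1 := by
  have hu' : IntervalIntegrable (fun t => (2 : ℝ) • u (2 * t)) volume 0 (1 / 2) := by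
    simpa [Pi.smul_def] using (hu.comp_mul_left (c := 2)).smul (2 : ℝ)
  have hv' : IntervalIntegrable (fun t => (2 : ℝ) • v (2 * t - 1)) volume (1 / 2) 1 := by
    simpa [Pi.smul_def] using ((hv.comp_sub_right 1).comp_mul_left (c := 2)).smul (2 : ℝ)
  refine (hu'.congr fun t ht => ?_).trans (hv'.congr fun t ht => ?_)
  · rw [uIoc_of_le (by norm_num)] at ht
    exact (concat_of_le_half ht.2).symm
  · rw [uIoc_of_le (by norm_num)] at ht
    exact (concat_of_half_lt ht.1).symm

lemma integral_concat_of_le_half {t : ℝ} (ht₀ : 0 ≤ t) (ht : t ≤ 1 / 2) :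
    ∫ s in 0..t, concat u v s = ∫ s in 0..2 * t, u s := by
  rw [intervalIntegral.integral_congr (g := fun s => (2 : ℝ) • u (2 * s)) fun s hs => ?_,
    intervalIntegral.integral_smul, intervalIntegral.integral_comp_mul_left _ two_ne_zero]
  · simp
  · rw [uIcc_of_le ht₀] at hs
    exact concat_of_le_half (hs.2.trans ht)

lemma integral_concat_of_half_le (hu : IntervalIntegrable u volume 0 1)
    (hv : IntervalIntegrable v volume 0 1) {t : ℝ} (ht : 1 / 2 ≤ t) (ht₁ : t ≤ 1) :
    ∫ s in 0..t, concat u v s = (∫ s in 0..1, u s) + ∫ s in 0..2 * t - 1, v s := by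
  have hint := intervalIntegrable_concat hu hv
  rw [← intervalIntegral.integral_add_adjacent_intervals (b := 1 / 2)
    (hint.mono_set (uIcc_subset_uIcc_left (by simp; norm_num)))
    (hint.mono_set (uIcc_subset_uIcc (by simp; norm_num) (by simp; constructor <;> linarith)))]
  congr 1
  · norm_num [integral_concat_of_le_half (u := u) (v := v) (t := 1 / 2) (by norm_num) le_rfl]
  · rw [intervalIntegral.integral_congr_ae (g := fun s => (2 : ℝ) • v (2 * s - 1)),
      intervalIntegral.integral_smul, intervalIntegral.integral_comp_mul_sub _ two_ne_zero]
    · norm_num [smul_smul]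
    · refine Filter.Eventually.of_forall fun s hs => ?_
      rw [uIoc_of_le ht] at hs
      exact concat_of_half_lt hs.1

lemma integral_concat (hu : IntervalIntegrable u volume 0 1)
    (hv : IntervalIntegrable v volume 0 1) :
    ∫ s in 0..1, concat u v s = (∫ s in 0..1, u s) + ∫ s in 0..1, v s := by
  have := integral_concat_of_half_le hu hv (by norm_num) le_rfl
  norm_num at this
  exact this

lemma integral_comp_concat {F : Type*} [NormedAddCommGroup F] [NormedSpace ℝ F] {c : E → F}
    (hc : ∀ x, c ((2 : ℝ) • x) = (2 : ℝ) • c x)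
    (hcu : IntervalIntegrable (fun t => c (u t)) volume 0 1)
    (hcv : IntervalIntegrable (fun t => c (v t)) volume 0 1) :
    ∫ t in 0..1, c (concat u v t) = (∫ t in 0..1, c (u t)) + ∫ t in 0..1, c (v t) := by
  simp only [comp_concat c hc]
  exact integral_concat hcu hcv

end Concat

lemma zero_hmul (q : Heis) : hmul 0 q = q := by
  simp [hmul, hbracket]

noncomputable def hspeed (x : Heis) : ℝ := √(x.1 ^ 2 + x.2.1 ^ 2)

noncomputable def finslerNorm (x : Heis) : ℝ := max (hspeed x) |x.2.2|

lemma hspeed_nonneg (x : Heis) : 0 ≤ hspeed x := Real.sqrt_nonneg _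

lemma hspeed_le_abs_add_abs (x : Heis) : hspeed x ≤ |x.1| + |x.2.1| := by
  rw [hspeed, Real.sqrt_le_left (by positivity)]
  nlinarith [abs_nonneg x.1, abs_nonneg x.2.1, sq_abs x.1, sq_abs x.2.1]

lemma hspeed_smul (c : ℝ) (x : Heis) : hspeed (c • x) = |c| * hspeed x := by
  simp only [hspeed, Prod.smul_fst, Prod.smul_snd, smul_eq_mul]
  rw [show (c * x.1) ^ 2 + (c * x.2.1) ^ 2 = c ^ 2 * (x.1 ^ 2 + x.2.1 ^ 2) by ring,
    Real.sqrt_mul (sq_nonneg c), Real.sqrt_sq_eq_abs]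

lemma continuous_hspeed : Continuous hspeed := by
  unfold hspeed; fun_prop

lemma IntervalIntegrable.hspeed {u : ℝ → Heis} {a b : ℝ} (hu : IntervalIntegrable u volume a b) :
    IntervalIntegrable (fun t => hspeed (u t)) volume a b :=
  (hu.fst.abs.add hu.snd.fst.abs).mono_fun'
    (continuous_hspeed.comp_aestronglyMeasurable hu.aestronglyMeasurable_restrict_uIoc)
    (ae_of_all _ fun _ => (Real.norm_of_nonneg (hspeed_nonneg _)).trans_le
      (hspeed_le_abs_add_abs _))

lemma IntervalIntegrable.finslerNorm {u : ℝ → Heis} {a b : ℝ}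
    (hu : IntervalIntegrable u volume a b) :
    IntervalIntegrable (fun t => finslerNorm (u t)) volume a b :=
  (hu.hspeed.add hu.snd.snd.abs).mono_fun'
    ((continuous_hspeed.max continuous_snd.snd.abs).comp_aestronglyMeasurable
      hu.aestronglyMeasurable_restrict_uIoc)
    (ae_of_all _ fun _ => (Real.norm_of_nonneg ((hspeed_nonneg _).trans (le_max_left _ _))).trans_le
      (max_le (le_add_of_nonneg_right (abs_nonneg _)) (le_add_of_nonneg_left (hspeed_nonneg _))))


noncomputable def areaRate (u : ℝ → Heis) (t : ℝ) : ℝ :=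
  (∫ s in 0..t, (u s).1) * (u t).2.1 - (u t).1 * ∫ s in 0..t, (u s).2.1

section Endpoint

variable {u v : ℝ → Heis}

lemma intervalIntegrable_areaRate (hu : IntervalIntegrable u volume 0 1) :
    IntervalIntegrable (areaRate u) volume 0 1 := by
  have h₁ := hu.fst
  have h₂ := hu.snd.fst
  exact (h₂.continuousOn_mul
      (intervalIntegral.continuousOn_primitive_interval' h₁ left_mem_uIcc)).sub
    (h₁.mul_continuousOn (intervalIntegral.continuousOn_primitive_interval' h₂ left_mem_uIcc))

lemma hEndpoint_eq (hu : IntervalIntegrable u volume 0 1) :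
    hEndpoint u = (∫ t in 0..1, (u t).1, ∫ t in 0..1, (u t).2.1,
      (∫ t in 0..1, (u t).2.2) + 2⁻¹ * ∫ t in 0..1, areaRate u t) := by
  have hbr : EqOn (fun t => hbracket (∫ s in 0..t, u s) (u t))
      (fun t => areaRate u t • ((0 : ℝ), (0 : ℝ), (1 : ℝ))) (uIcc 0 1) := by
    intro t ht
    have hut : IntervalIntegrable u volume 0 t := hu.mono_set (uIcc_subset_uIcc_left ht)
    simp [hbracket, areaRate, intervalIntegral.fst_integral hut,
      intervalIntegral.fst_integral hut.snd, intervalIntegral.snd_integral hut]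
  rw [hEndpoint, intervalIntegral.integral_congr hbr, intervalIntegral.integral_smul_const]
  refine Prod.ext ?_ (Prod.ext ?_ ?_) <;>
    simp [intervalIntegral.fst_integral hu, intervalIntegral.snd_integral hu,
      intervalIntegral.fst_integral hu.snd, intervalIntegral.snd_integral hu.snd]

lemma IntervalIntegrable.add_vertical (hu : IntervalIntegrable u volume 0 1) {h : ℝ → ℝ}
    (hh : IntervalIntegrable h volume 0 1) :
    IntervalIntegrable (fun t => u t + ((0 : ℝ), (0 : ℝ), h t)) volume 0 1 := by
  simpa using hu.add (hh.smul_continuousOn (continuousOn_const (c := ((0 : ℝ), (0 : ℝ), (1 : ℝ)))))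

lemma hEndpoint_add_vertical (hu : IntervalIntegrable u volume 0 1) {h : ℝ → ℝ}
    (hh : IntervalIntegrable h volume 0 1) :
    hEndpoint (fun t => u t + ((0 : ℝ), (0 : ℝ), h t)) =
      hEndpoint u + ((0 : ℝ), (0 : ℝ), ∫ t in 0..1, h t) := by
  have huh := hu.add_vertical hh
  have harea : areaRate (fun t => u t + ((0 : ℝ), (0 : ℝ), h t)) = areaRate u := by
    ext t; simp [areaRate]
  rw [hEndpoint_eq huh, hEndpoint_eq hu, harea]
  refine Prod.ext ?_ (Prod.ext ?_ ?_) <;> simp [intervalIntegral.integral_add hu.snd.snd hh]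
  ring

lemma hEndpoint_const (c : Heis) : hEndpoint (fun _ => c) = c := by
  have harea : areaRate (fun _ => c) = 0 := by
    ext t; simp [areaRate]; ring
  rw [hEndpoint_eq intervalIntegrable_const, harea]
  simp

lemma areaRate_concat (hu : IntervalIntegrable u volume 0 1)
    (hv : IntervalIntegrable v volume 0 1) {t : ℝ} (ht : t ∈ Icc (0 : ℝ) 1) :
    areaRate (concat u v) t = concat (areaRate u) (fun s => areaRate v s +
      (∫ x in 0..1, (u x).1) * (v s).2.1 - (v s).1 * ∫ x in 0..1, (u x).2.1) t := by
  have h₁ (s : ℝ) : (concat u v s).1 = concat (fun x => (u x).1) (fun x => (v x).1) s :=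
    comp_concat Prod.fst (by simp) s
  have h₂ (s : ℝ) : (concat u v s).2.1 = concat (fun x => (u x).2.1) (fun x => (v x).2.1) s :=
    comp_concat (fun x : Heis => x.2.1) (by simp) s
  simp only [areaRate, h₁, h₂]
  rcases le_or_gt t (1 / 2) with ht' | ht'
  · simp only [concat_of_le_half ht', integral_concat_of_le_half ht.1 ht', smul_eq_mul, areaRate]
    ring
  · simp only [concat_of_half_lt ht', integral_concat_of_half_le hu.fst hv.fst ht'.le ht.2,
      integral_concat_of_half_le hu.snd.fst hv.snd.fst ht'.le ht.2, smul_eq_mul]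
    ring

lemma hEndpoint_concat (hu : IntervalIntegrable u volume 0 1)
    (hv : IntervalIntegrable v volume 0 1) :
    hEndpoint (concat u v) = hmul (hEndpoint u) (hEndpoint v) := by
  have hrest : IntervalIntegrable (fun s => areaRate v s +
      (∫ x in 0..1, (u x).1) * (v s).2.1 - (v s).1 * ∫ x in 0..1, (u x).2.1) volume 0 1 :=
    ((intervalIntegrable_areaRate hv).add (hv.snd.fst.const_mul _)).sub (hv.fst.mul_const _)
  have harea : ∫ t in 0..1, areaRate (concat u v) t = (∫ t in 0..1, areaRate u t) +
      (∫ t in 0..1, areaRate v t) + (∫ x in 0..1, (u x).1) * (∫ x in 0..1, (v x).2.1) -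
      (∫ x in 0..1, (v x).1) * ∫ x in 0..1, (u x).2.1 := by
    rw [intervalIntegral.integral_congr fun t ht => areaRate_concat hu hv
        (by rwa [uIcc_of_le zero_le_one] at ht),
      integral_concat (intervalIntegrable_areaRate hu) hrest,
      intervalIntegral.integral_sub ((intervalIntegrable_areaRate hv).add
        (hv.snd.fst.const_mul _)) (hv.fst.mul_const _),
      intervalIntegral.integral_add (intervalIntegrable_areaRate hv) (hv.snd.fst.const_mul _),
      intervalIntegral.integral_const_mul, intervalIntegral.integral_mul_const]
    ring
  rw [hEndpoint_eq (intervalIntegrable_concat hu hv), hEndpoint_eq hu, hEndpoint_eq hv, harea,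
    integral_comp_concat (c := Prod.fst) (by simp) hu.fst hv.fst,
    integral_comp_concat (c := fun x : Heis => x.2.1) (by simp) hu.snd.fst hv.snd.fst,
    integral_comp_concat (c := fun x : Heis => x.2.2) (by simp) hu.snd.snd hv.snd.snd]
  ext <;> simp [hmul, hbracket]
  ring

lemma concat_snd_snd_eq_zero {u v : ℝ → Heis} (hu : ∀ t, (u t).2.2 = 0) (hv : ∀ t, (v t).2.2 = 0)
    (t : ℝ) : (concat u v t).2.2 = 0 := by
  unfold concat; split_ifs <;> simp [hu, hv]

def horizontalPart (u : ℝ → Heis) (t : ℝ) : Heis := ((u t).1, (u t).2.1, 0)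

lemma IntervalIntegrable.horizontalPart (hu : IntervalIntegrable u volume 0 1) :
    IntervalIntegrable (horizontalPart u) volume 0 1 :=
  hu.fst.prodMk (hu.snd.fst.prodMk intervalIntegrable_const)

lemma hEndpoint_eq_horizontalPart_add (hu : IntervalIntegrable u volume 0 1) :
    hEndpoint u = hEndpoint (horizontalPart u) + ((0 : ℝ), (0 : ℝ), ∫ t in 0..1, (u t).2.2) := by
  rw [← hEndpoint_add_vertical hu.horizontalPart hu.snd.snd]
  congr 1
  ext t <;> simp [horizontalPart]

end Endpoint

def verticalLoop (α β t : ℝ) : Heis := (α * (1 - 2 * t), β * (2 * t - 3 * t ^ 2), 0)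

lemma continuous_verticalLoop (α β : ℝ) : Continuous (verticalLoop α β) := by
  unfold verticalLoop; fun_prop

lemma hEndpoint_verticalLoop (α β : ℝ) : hEndpoint (verticalLoop α β) = (0, 0, α * β / 60) := by
  have h₁ (t : ℝ) : ∫ s in 0..t, (verticalLoop α β s).1 = α * (t - t ^ 2) := by
    rw [intervalIntegral.integral_deriv_eq_sub' (fun s => α * (s - s ^ 2))]
    · ring
    · ext s; simp [verticalLoop]
    · intro s _; fun_prop
    · unfold verticalLoop; fun_prop
  have h₂ (t : ℝ) : ∫ s in 0..t, (verticalLoop α β s).2.1 = β * (t ^ 2 - t ^ 3) := by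
    rw [intervalIntegral.integral_deriv_eq_sub' (fun s => β * (s ^ 2 - s ^ 3))]
    · ring
    · ext s; simp [verticalLoop]
    · intro s _; fun_prop
    · unfold verticalLoop; fun_prop
  have harea : areaRate (verticalLoop α β) = fun t => α * β * (t ^ 2 - 2 * t ^ 3 + t ^ 4) := by
    ext t; simp only [areaRate, h₁, h₂]; simp [verticalLoop]; ring
  have hderiv (t : ℝ) : HasDerivAt (fun t => α * β * (t ^ 3 / 3 - t ^ 4 / 2 + t ^ 5 / 5))
      (α * β * (t ^ 2 - 2 * t ^ 3 + t ^ 4)) t := by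
    refine ((((hasDerivAt_pow 3 t).div_const 3).sub ((hasDerivAt_pow 4 t).div_const 2)).add
      ((hasDerivAt_pow 5 t).div_const 5) |>.const_mul (α * β)).congr_deriv ?_
    push_cast; ring
  rw [hEndpoint_eq ((continuous_verticalLoop α β).intervalIntegrable 0 1), h₁, h₂, harea,
    intervalIntegral.integral_eq_sub_of_hasDerivAt (fun t _ => hderiv t)
      (Continuous.intervalIntegrable (by fun_prop) _ _)]
  simp [verticalLoop]
  ring

lemma hspeed_verticalLoop_le (α β : ℝ) {t : ℝ} (ht : t ∈ Icc (0 : ℝ) 1) :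
    hspeed (verticalLoop α β t) ≤ |α| + |β| := by
  have h₁ : |1 - 2 * t| ≤ 1 := abs_le.2 ⟨by linarith [ht.2], by linarith [ht.1]⟩
  have h₂ : |2 * t - 3 * t ^ 2| ≤ 1 := abs_le.2 ⟨by nlinarith [ht.1, ht.2], by nlinarith [ht.1]⟩
  refine (hspeed_le_abs_add_abs _).trans (add_le_add ?_ ?_) <;>
    simp only [verticalLoop, abs_mul] <;> nlinarith [abs_nonneg α, abs_nonneg β]

lemma exists_vertical_control (μ : ℝ) : ∃ u : ℝ → Heis, Continuous u ∧ (∀ t, (u t).2.2 = 0) ∧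
    hEndpoint u = (0, 0, μ) ∧ ∫ t in 0..1, hspeed (u t) ≤ 2 * √(60 * |μ|) := by
  set s := √(60 * |μ|)
  have hs : s * s = 60 * |μ| := Real.mul_self_sqrt (by positivity)
  obtain ⟨α, hα, hαs⟩ : ∃ α, |α| = s ∧ α * s / 60 = μ := by
    rcases le_total 0 μ with hμ | hμ
    · refine ⟨s, abs_of_nonneg (Real.sqrt_nonneg _), ?_⟩
      rw [abs_of_nonneg hμ] at hs; linarith
    · refine ⟨-s, by rw [abs_neg, abs_of_nonneg (Real.sqrt_nonneg _)], ?_⟩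
      rw [abs_of_nonpos hμ] at hs; linarith
  refine ⟨verticalLoop α s, continuous_verticalLoop α s, fun _ => rfl,
    by rw [hEndpoint_verticalLoop, hαs], ?_⟩
  calc ∫ t in 0..1, hspeed (verticalLoop α s t) ≤ ∫ _ in (0 : ℝ)..1, |α| + |s| :=
        intervalIntegral.integral_mono_on zero_le_one
          ((continuous_verticalLoop α s).intervalIntegrable 0 1).hspeed
          intervalIntegrable_const fun t ht => hspeed_verticalLoop_le α s ht
    _ = 2 * s := by
        rw [intervalIntegral.integral_const, hα, abs_of_nonneg (Real.sqrt_nonneg _)]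
        simp only [sub_zero, one_smul]; ring

lemma exists_horizontal_control (v : Heis) :
    ∃ u : ℝ → Heis, IntervalIntegrable u volume 0 1 ∧ (∀ t, (u t).2.2 = 0) ∧ hEndpoint u = v := by
  obtain ⟨w, hw, hw₃, hwE, -⟩ := exists_vertical_control v.2.2
  refine ⟨concat (fun _ => (v.1, v.2.1, 0)) w, intervalIntegrable_concat intervalIntegrable_const
    (hw.intervalIntegrable 0 1), concat_snd_snd_eq_zero (fun _ => rfl) hw₃, ?_⟩
  rw [hEndpoint_concat intervalIntegrable_const (hw.intervalIntegrable 0 1), hEndpoint_const, hwE]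
  simp [hmul, hbracket]

lemma dH_zero_le {u : ℝ → Heis} (hu : IntervalIntegrable u volume 0 1)
    (hu₃ : ∀ t, (u t).2.2 = 0) : dH 0 (hEndpoint u) ≤ ∫ t in 0..1, hspeed (u t) := by
  refine csInf_le ⟨0, ?_⟩ ⟨u, hu, ae_of_all _ hu₃, by rw [neg_zero, zero_hmul], rfl⟩
  rintro _ ⟨w, -, -, -, rfl⟩
  exact intervalIntegral.integral_nonneg zero_le_one fun t _ => hspeed_nonneg (w t)

lemma exists_horizontal_lt_of_dH_lt {v : Heis} {c : ℝ} (h : dH 0 v < c) :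
    ∃ u : ℝ → Heis, IntervalIntegrable u volume 0 1 ∧ (∀ t, (u t).2.2 = 0) ∧
      hEndpoint u = v ∧ ∫ t in 0..1, hspeed (u t) < c := by
  have hlt := exists_lt_of_csInf_lt ?_ h
  swap
  · obtain ⟨u, hu, hu₃, hE⟩ := exists_horizontal_control v
    exact ⟨_, u, hu, ae_of_all _ hu₃, by rw [neg_zero, zero_hmul, hE], rfl⟩
  obtain ⟨_, ⟨u, hu, hu₃, hE, rfl⟩, hlt⟩ := hlt
  have hint₃ : ∫ t in 0..1, (u t).2.2 = 0 := by
    rw [intervalIntegral.integral_of_le zero_le_one]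
    exact integral_eq_zero_of_ae (ae_restrict_of_ae_restrict_of_subset Ioc_subset_Icc_self hu₃)
  refine ⟨horizontalPart u, hu.horizontalPart, fun _ => rfl, ?_, hlt⟩
  rw [neg_zero, zero_hmul, hEndpoint_eq_horizontalPart_add hu, hint₃] at hE
  simpa [Prod.mk_zero_zero] using hE

lemma dH_add_vertical_le (v : Heis) (a b : ℝ) :
    dH 0 (v + (0, 0, a)) ≤ dH 0 (v + (0, 0, b)) + 2 * √(60 * |a - b|) := by
  refine le_of_forall_pos_lt_add fun ε hε => ?_
  obtain ⟨u, hu, hu₃, hE, hlen⟩ :=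
    exists_horizontal_lt_of_dH_lt (lt_add_of_pos_right (dH 0 (v + (0, 0, b))) hε)
  obtain ⟨w, hw, hw₃, hwE, hwlen⟩ := exists_vertical_control (a - b)
  have hw' := hw.intervalIntegrable (μ := volume) 0 1
  have hE' : hEndpoint (concat u w) = v + (0, 0, a) := by
    rw [hEndpoint_concat hu hw', hE, hwE]
    ext <;> simp [hmul, hbracket]
  have hlen' : ∫ t in 0..1, hspeed (concat u w t) =
      (∫ t in 0..1, hspeed (u t)) + ∫ t in 0..1, hspeed (w t) :=
    integral_comp_concat (fun x => by rw [hspeed_smul, abs_two, smul_eq_mul]) hu.hspeed hw'.hspeed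
  calc dH 0 (v + (0, 0, a)) ≤ ∫ t in 0..1, hspeed (concat u w t) :=
        hE' ▸ dH_zero_le (intervalIntegrable_concat hu hw') (concat_snd_snd_eq_zero hu₃ hw₃)
    _ < dH 0 (v + (0, 0, b)) + 2 * √(60 * |a - b|) + ε := by linarith

lemma continuous_dH_add_vertical (v : Heis) :
    Continuous fun μ : ℝ => dH 0 (v + (0, 0, μ)) := by
  refine continuous_iff_continuousAt.2 fun b => ?_
  have hg : Tendsto (fun a => 2 * √(60 * |a - b|)) (𝓝 b) (𝓝 0) := by
    have := (by fun_prop : Continuous fun a : ℝ => 2 * √(60 * |a - b|)).tendsto b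
    rwa [sub_self, abs_zero, mul_zero, Real.sqrt_zero, mul_zero] at this
  refine tendsto_of_tendsto_of_tendsto_of_le_of_le
    (g := fun a => dH 0 (v + (0, 0, b)) - 2 * √(60 * |a - b|))
    (h := fun a => dH 0 (v + (0, 0, b)) + 2 * √(60 * |a - b|))
    (by simpa using tendsto_const_nhds.sub hg) (by simpa using tendsto_const_nhds.add hg)
    (fun a => ?_) (fun a => dH_add_vertical_le v a b)
  have := dH_add_vertical_le v b a
  rw [abs_sub_comm] at this
  dsimp only
  linarith

lemma dFin_zero_le {u : ℝ → Heis} (hu : IntervalIntegrable u volume 0 1) :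
    dFin finslerNorm 0 (hEndpoint u) ≤ ∫ t in 0..1, finslerNorm (u t) := by
  refine csInf_le ⟨0, ?_⟩ ⟨u, hu, by rw [neg_zero, zero_hmul], rfl⟩
  rintro _ ⟨w, -, -, rfl⟩
  exact intervalIntegral.integral_nonneg zero_le_one fun t _ =>
    (hspeed_nonneg (w t)).trans (le_max_left _ _)

lemma exists_lt_of_dFin_lt {v : Heis} {c : ℝ} (h : dFin finslerNorm 0 v < c) :
    ∃ u : ℝ → Heis, IntervalIntegrable u volume 0 1 ∧ hEndpoint u = v ∧
      ∫ t in 0..1, finslerNorm (u t) < c := by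
  have hlt := exists_lt_of_csInf_lt ?_ h
  swap
  · exact ⟨_, fun _ => v, intervalIntegrable_const, by rw [neg_zero, zero_hmul, hEndpoint_const],
      rfl⟩
  obtain ⟨_, ⟨u, hu, hE, rfl⟩, hlt⟩ := hlt
  exact ⟨u, hu, by rwa [neg_zero, zero_hmul] at hE, hlt⟩

lemma exists_dH_lt_of_dFin_lt {q : Heis} {c : ℝ} (h : dFin finslerNorm 0 q < c) :
    ∃ μ : ℝ, |μ| < c ∧ dH 0 (q + (0, 0, μ)) < c := by
  obtain ⟨u, hu, hE, hlen⟩ := exists_lt_of_dFin_lt h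
  refine ⟨-∫ t in 0..1, (u t).2.2, ?_, ?_⟩
  · calc |-∫ t in 0..1, (u t).2.2| ≤ ∫ t in 0..1, |(u t).2.2| := by
          rw [abs_neg]; exact intervalIntegral.abs_integral_le_integral_abs zero_le_one
      _ ≤ ∫ t in 0..1, finslerNorm (u t) :=
          intervalIntegral.integral_mono_on zero_le_one hu.snd.snd.abs hu.finslerNorm
            fun t _ => le_max_right _ _
      _ < c := hlen
  · have hE' : hEndpoint (horizontalPart u) = q + (0, 0, -∫ t in 0..1, (u t).2.2) := by
      rw [← hE, hEndpoint_eq_horizontalPart_add hu]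
      ext <;> simp
    calc dH 0 (q + (0, 0, -∫ t in 0..1, (u t).2.2)) ≤ ∫ t in 0..1, hspeed (u t) :=
          hE' ▸ dH_zero_le hu.horizontalPart fun _ => rfl
      _ ≤ ∫ t in 0..1, finslerNorm (u t) :=
          intervalIntegral.integral_mono_on zero_le_one hu.hspeed hu.finslerNorm
            fun t _ => le_max_left _ _
      _ < c := hlen

lemma finslerNorm_add_vertical_le {x : Heis} (hx : x.2.2 = 0) {δ L : ℝ} (hδ : 0 ≤ δ)
    (hL : 0 < L) (lam : ℝ) :
    finslerNorm (x + (0, 0, lam * ((hspeed x + δ) / L))) ≤ max 1 (|lam| / L) * (hspeed x + δ) := by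
  have hs : 0 ≤ hspeed x + δ := add_nonneg (hspeed_nonneg x) hδ
  refine max_le ?_ ?_
  · calc hspeed (x + (0, 0, lam * ((hspeed x + δ) / L))) = hspeed x := by simp [hspeed]
      _ ≤ 1 * (hspeed x + δ) := by linarith
      _ ≤ max 1 (|lam| / L) * (hspeed x + δ) := by gcongr; exact le_max_left _ _
  · calc |(x + (0, 0, lam * ((hspeed x + δ) / L))).2.2| = |lam| / L * (hspeed x + δ) := by
          simp only [Prod.snd_add, hx, zero_add, abs_mul, abs_div, abs_of_pos hL,
            abs_of_nonneg hs]
          ring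
      _ ≤ max 1 (|lam| / L) * (hspeed x + δ) := by gcongr; exact le_max_right _ _

lemma dFin_add_vertical_le {u : ℝ → Heis} (hu : IntervalIntegrable u volume 0 1)
    (hu₃ : ∀ t, (u t).2.2 = 0) {δ : ℝ} (hδ : 0 < δ) (lam : ℝ) :
    dFin finslerNorm 0 (hEndpoint u + (0, 0, lam)) ≤
      max ((∫ t in 0..1, hspeed (u t)) + δ) |lam| := by
  set L := (∫ t in 0..1, hspeed (u t)) + δ
  have hL : 0 < L := add_pos_of_nonneg_of_pos
    (intervalIntegral.integral_nonneg zero_le_one fun t _ => hspeed_nonneg (u t)) hδ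
  have hsδ : IntervalIntegrable (fun t => hspeed (u t) + δ) volume 0 1 :=
    hu.hspeed.add intervalIntegrable_const
  have hint : ∫ t in 0..1, (hspeed (u t) + δ) = L := by
    rw [intervalIntegral.integral_add hu.hspeed intervalIntegrable_const]; simp [L]
  -- `δ > 0` keeps `L` positive even when `u` has horizontal length zero
  set h := fun t => lam * ((hspeed (u t) + δ) / L)
  have hh : IntervalIntegrable h volume 0 1 := (hsδ.div_const _).const_mul _
  have hhint : ∫ t in 0..1, h t = lam := by
    simp only [h, intervalIntegral.integral_const_mul, intervalIntegral.integral_div, hint,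
      div_self hL.ne', mul_one]
  calc dFin finslerNorm 0 (hEndpoint u + (0, 0, lam))
      ≤ ∫ t in 0..1, finslerNorm (u t + (0, 0, h t)) := by
        rw [← hhint, ← hEndpoint_add_vertical hu hh]; exact dFin_zero_le (hu.add_vertical hh)
    _ ≤ ∫ t in 0..1, max 1 (|lam| / L) * (hspeed (u t) + δ) :=
        intervalIntegral.integral_mono_on zero_le_one (hu.add_vertical hh).finslerNorm
          (hsδ.const_mul _) fun t _ => finslerNorm_add_vertical_le (hu₃ t) hδ.le hL lam
    _ = max L |lam| := by
        rw [intervalIntegral.integral_const_mul, hint, max_mul_of_nonneg _ _ hL.le, one_mul,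
          div_mul_cancel₀ _ hL.ne']

lemma dFin_add_vertical_le_of_dH_le {p : Heis} {r lam : ℝ} (hp : dH 0 p ≤ r) (hlam : |lam| ≤ r) :
    dFin finslerNorm 0 (p + (0, 0, lam)) ≤ r := by
  refine le_of_forall_pos_lt_add fun ε hε => ?_
  obtain ⟨u, hu, hu₃, rfl, hlen⟩ :=
    exists_horizontal_lt_of_dH_lt (hp.trans_lt (lt_add_of_pos_right r (half_pos hε)))
  calc dFin finslerNorm 0 (hEndpoint u + (0, 0, lam))
      ≤ max ((∫ t in 0..1, hspeed (u t)) + ε / 2) |lam| :=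
        dFin_add_vertical_le hu hu₃ (half_pos hε) lam
    _ < r + ε := max_lt (by linarith) (by linarith)

lemma exists_dH_add_vertical_le_of_dFin_le {q : Heis} {r : ℝ} (hq : dFin finslerNorm 0 q ≤ r) :
    ∃ μ : ℝ, |μ| ≤ r ∧ dH 0 (q + (0, 0, μ)) ≤ r := by
  obtain ⟨μ, hμ⟩ := exists_le_of_forall_exists_lt
    (continuous_abs.max (continuous_dH_add_vertical q)) (fun _ => le_max_left _ _)
    fun ε hε => (exists_dH_lt_of_dFin_lt (hq.trans_lt (lt_add_of_pos_right r hε))).imp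
      fun _ hμ => max_lt hμ.1 hμ.2
  exact ⟨μ, max_le_iff.1 hμ⟩

/-- for the `ℓ^∞`-type norm `‖u‖ = max(√(u₁²+u₂²), |u₃|)`, the closed
`d_F`-ball of radius `r` is the vertical `[−r,r]`-thickening of the closed sub-Riemannian
ball of radius `r`. -/
theorem stmt_15 :
    ∀ r : ℝ, 0 ≤ r →
      {q : Heis | dFin (fun u => max (Real.sqrt (u.1 ^ 2 + u.2.1 ^ 2)) |u.2.2|) 0 q ≤ r} =
      {x : Heis | ∃ p : Heis, ∃ lam : ℝ, dH 0 p ≤ r ∧ lam ∈ Set.Icc (-r) r ∧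
        x = p + lam • ((0:ℝ), (0:ℝ), (1:ℝ))} := by
  intro r _
  ext q
  change dFin finslerNorm 0 q ≤ r ↔ _
  constructor
  · intro hq
    obtain ⟨μ, hμ, hp⟩ := exists_dH_add_vertical_le_of_dFin_le hq
    refine ⟨q + (0, 0, μ), -μ, hp, ?_, by ext <;> simp⟩
    rw [mem_Icc, neg_le_neg_iff, neg_le]
    exact (abs_le.1 hμ).symm
  · rintro ⟨p, lam, hp, hlam, rfl⟩
    simpa using dFin_add_vertical_le_of_dH_le hp (abs_le.2 hlam)
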